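/- arXiv:2401.15394 — 4 statements merged into one kernel-verified Lean document; each statement's English description precedes it below -/
import Mathlib

section
/- Let G be the octahedron graph, i.e., the complete tripartite graph K_{2,2,2} on six vertices (the vertex set consists of three pairs, and two vertices are adjacent if and only if they belong to different pairs). Then every subset S of the vertex set of G such that the subgraph of G induced on S is a triangle-forest satisfies |S| ≤ 3. In particular, every induced triangle-forest of the octahedron contains at most half of its vertices. -/
/-- A graph is a *triangle-forest* if every cycle in it has length exactly three
(equivalently, it has no cycles of length at least four). -/
def SimpleGraph.IsTriangleForest {V : Type*} (G : SimpleGraph V) : Prop :=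
  ∀ (v : V) (c : G.Walk v v), c.IsCycle → c.length = 3

/-- The octahedron graph `K_{2,2,2}` on six vertices: the pairs are `{0,1}`, `{2,3}`, `{4,5}`,
and two vertices are adjacent iff they lie in different pairs. -/
def octahedron : SimpleGraph (Fin 6) :=
  SimpleGraph.fromRel (fun u v => u.val / 2 ≠ v.val / 2)

lemma pair_unique : ∀ a b c : Fin 6, a.val / 2 = b.val / 2 → a.val / 2 = c.val / 2 →
    a ≠ b → a ≠ c → b = c := by decide

lemma oct_adj {a b : Fin 6} (hne : a ≠ b) (hp : a.val / 2 ≠ b.val / 2) :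
    octahedron.Adj a b := ⟨hne, Or.inl hp⟩

/-- Every induced triangle-forest of the octahedron has at most `3` vertices,
i.e., at most half of its `6` vertices. -/
theorem octahedron_induced_triangleForest_card_le
    (S : Finset (Fin 6))
    (h : (octahedron.induce (S : Set (Fin 6))).IsTriangleForest) :
    S.card ≤ 3 := by
  by_contra hc
  push_neg at hc
  -- find a pair a,b in S in the same part
  obtain ⟨a, haS, b, hbS, hab, hpab⟩ :
      ∃ a ∈ S, ∃ b ∈ S, a ≠ b ∧ a.val / 2 = b.val / 2 := by
    obtain ⟨a, haS, b, hbS, hab, heq⟩ :=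
      Finset.exists_ne_map_eq_of_card_lt_of_maps_to (s := S) (t := (Finset.univ : Finset (Fin 3)))
        (by simpa using hc) (fun x _ => Finset.mem_univ (⟨x.val / 2, by omega⟩ : Fin 3))
    exact ⟨a, haS, b, hbS, hab, by simpa [Fin.ext_iff] using heq⟩
  -- two more vertices
  have hT : 1 < (S \ {a, b}).card := by
    have : ({a, b} : Finset (Fin 6)).card ≤ 2 := Finset.card_insert_le _ _ |>.trans (by simp)
    have h2 := Finset.le_card_sdiff ({a,b} : Finset (Fin 6)) S
    omega
  obtain ⟨c, hcT, d, hdT, hcd⟩ := Finset.one_lt_card.mp hT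
  simp only [Finset.mem_sdiff, Finset.mem_insert, Finset.mem_singleton, not_or] at hcT hdT
  obtain ⟨hcS, hca, hcb⟩ := hcT
  obtain ⟨hdS, hda, hdb⟩ := hdT
  have hcp : c.val / 2 ≠ a.val / 2 := fun hx =>
    hcb (pair_unique a b c hpab hx.symm hab (Ne.symm hca)).symm
  have hdp : d.val / 2 ≠ a.val / 2 := fun hx =>
    hdb (pair_unique a b d hpab hx.symm hab (Ne.symm hda)).symm
  -- build the 4-cycle a - c - b - d - a in the induced graph
  set G := octahedron.induce (S : Set (Fin 6)) with hG
  let A : (S : Set (Fin 6)) := ⟨a, haS⟩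
  let B : (S : Set (Fin 6)) := ⟨b, hbS⟩
  let C : (S : Set (Fin 6)) := ⟨c, hcS⟩
  let D : (S : Set (Fin 6)) := ⟨d, hdS⟩
  have hAC : G.Adj A C := oct_adj (Ne.symm hca) (fun hx => hcp hx.symm)
  have hCB : G.Adj C B := oct_adj hcb (hpab ▸ hcp)
  have hBD : G.Adj B D := oct_adj (Ne.symm hdb) (fun hx => hdp (hx.symm.trans hpab.symm))
  have hDA : G.Adj D A := oct_adj hda hdp
  let w : G.Walk A A :=
    SimpleGraph.Walk.cons hAC (SimpleGraph.Walk.cons hCB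
      (SimpleGraph.Walk.cons hBD (SimpleGraph.Walk.cons hDA SimpleGraph.Walk.nil)))
  have hw : w.IsCycle := by
    rw [SimpleGraph.Walk.isCycle_def, SimpleGraph.Walk.isTrail_def]
    refine ⟨?_, by simp [w], ?_⟩
    · simp only [w, SimpleGraph.Walk.edges_cons, SimpleGraph.Walk.edges_nil,
        List.nodup_cons, List.mem_cons, List.not_mem_nil, or_false, List.nodup_nil, and_true,
        Sym2.eq, Sym2.rel_iff', Prod.mk.injEq, Prod.swap_prod_mk, not_or]
      simp only [A, B, C, D, Subtype.mk.injEq]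
      tauto
    · simp only [w, SimpleGraph.Walk.support_cons, SimpleGraph.Walk.support_nil, List.tail_cons,
        List.nodup_cons, List.mem_cons, List.not_mem_nil, or_false, List.nodup_nil, and_true,
        not_or, List.mem_singleton]
      simp only [A, B, C, D, Subtype.mk.injEq]
      tauto
  have := h A w hw
  simp [w] at this
end

section
/- Fix n ≥ 1 and let G be the disjoint union of n copies of the octahedron graph K_{2,2,2}; concretely, G is the graph on vertex set Fin n × Fin 6 in which (i, u) and (j, v) are adjacent if and only if i = j and u, v are adjacent in the octahedron (where the octahedron on Fin 6 has vertex pairs {0,1}, {2,3}, {4,5} and two vertices are adjacent iff they lie in different pairs). Then every subset S of the vertex set of G such that the subgraph of G induced on S is a triangle-forest satisfies |S| ≤ 3n, i.e., every induced triangle-forest of G contains at most half of the vertices of G. -/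
/-- The disjoint union of `n` copies of the octahedron: `(i, u)` and `(j, v)` are adjacent
iff `i = j` and `u`, `v` are adjacent in the octahedron. -/
def nOctahedra (n : ℕ) : SimpleGraph (Fin n × Fin 6) where
  Adj x y := x.1 = y.1 ∧ octahedron.Adj x.2 y.2
  symm := by
    constructor
    rintro x y ⟨h1, h2⟩
    exact ⟨h1.symm, h2.symm⟩
  loopless := by
    constructor
    rintro x ⟨-, h2⟩
    exact octahedron.ne_of_adj h2 rfl

namespace SimpleGraph

theorem IsTriangleForest.not_adj_cycle_four {V : Type*} {G : SimpleGraph V}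
    (hG : G.IsTriangleForest) {a b c d : V} (hab : G.Adj a b) (hbc : G.Adj b c)
    (hcd : G.Adj c d) (hda : G.Adj d a) (hac : a ≠ c) (hbd : b ≠ d) : False := by
  have hcycle : (Walk.cons hab (.cons hbc (.cons hcd (.cons hda .nil)))).IsCycle := by
    simp [Walk.cons_isCycle_iff, hab.ne, hbc.ne, hcd.ne, hda.ne, hac, hbd, hab.ne.symm,
      hda.ne.symm, hac.symm]
  simpa using hG a _ hcycle

end SimpleGraph

instance : DecidableRel octahedron.Adj := fun a b =>
  inferInstanceAs (Decidable (a ≠ b ∧ (a.val / 2 ≠ b.val / 2 ∨ b.val / 2 ≠ a.val / 2)))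

set_option maxRecDepth 100000 in
theorem octahedron_exists_cycle_four_of_four_le_card (s : Finset (Fin 6)) (hs : 4 ≤ s.card) :
    ∃ a ∈ s, ∃ b ∈ s, ∃ c ∈ s, ∃ d ∈ s, octahedron.Adj a b ∧ octahedron.Adj b c ∧
      octahedron.Adj c d ∧ octahedron.Adj d a ∧ a ≠ c ∧ b ≠ d := by
  revert s; decide

theorem card_filter_fst_eq_le_three {n : ℕ} {S : Finset (Fin n × Fin 6)}
    (hS : ((nOctahedra n).induce (S : Set (Fin n × Fin 6))).IsTriangleForest) (i : Fin n) :
    (S.filter fun p => p.1 = i).card ≤ 3 := by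
  set t := Finset.univ.filter fun u => (i, u) ∈ S
  have hcard : (S.filter fun p => p.1 = i).card ≤ t.card := by
    refine Finset.card_le_card_of_injOn Prod.snd ?_ ?_
    · rintro ⟨j, u⟩ hp
      obtain ⟨hp, rfl⟩ := Finset.mem_filter.mp hp
      simpa [t] using hp
    · rintro ⟨j, u⟩ hp ⟨k, v⟩ hq (huv : u = v)
      simp_all
  by_contra! ht
  replace ht : 3 < t.card := ht.trans_le hcard
  obtain ⟨a, ha, b, hb, c, hc, d, hd, hab, hbc, hcd, hda, hac, hbd⟩ :=
    octahedron_exists_cycle_four_of_four_le_card t ht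
  simp only [t, Finset.mem_filter, Finset.mem_univ, true_and] at ha hb hc hd
  exact hS.not_adj_cycle_four (a := ⟨(i, a), ha⟩) (b := ⟨(i, b), hb⟩) (c := ⟨(i, c), hc⟩)
    (d := ⟨(i, d), hd⟩) ⟨rfl, hab⟩ ⟨rfl, hbc⟩ ⟨rfl, hcd⟩ ⟨rfl, hda⟩
    (fun h => hac (congrArg (·.1.2) h)) (fun h => hbd (congrArg (·.1.2) h))

theorem nOctahedra_induced_triangleForest_card_le_general (n : ℕ)
    (S : Finset (Fin n × Fin 6))
    (h : ((nOctahedra n).induce (S : Set (Fin n × Fin 6))).IsTriangleForest) :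
    S.card ≤ 3 * n :=
  calc S.card = ∑ i : Fin n, (S.filter fun p => p.1 = i).card :=
        Finset.card_eq_sum_card_fiberwise fun _ _ => Finset.mem_univ _
    _ ≤ ∑ _i : Fin n, 3 := Finset.sum_le_sum fun i _ => card_filter_fst_eq_le_three h i
    _ = 3 * n := by simp [mul_comm]

/-- Every induced triangle-forest of a disjoint union of `n ≥ 1` octahedra has at most `3n`
vertices, i.e., at most half of the `6n` vertices. -/
theorem nOctahedra_induced_triangleForest_card_le (n : ℕ) (hn : 1 ≤ n)
    (S : Finset (Fin n × Fin 6))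
    (h : ((nOctahedra n).induce (S : Set (Fin n × Fin 6))).IsTriangleForest) :
    S.card ≤ 3 * n :=
  nOctahedra_induced_triangleForest_card_le_general n S h
end

section
/- The complete graph K_7 on seven vertices cannot be vertex-partitioned into two triangle-forests: for every subset S of the vertex set of K_7, it is not the case that both the subgraph induced on S and the subgraph induced on the complement of S are triangle-forests. -/
namespace SimpleGraph

variable {V : Type*}

lemma exists_isCycle_length_four_top (f : Fin 4 ↪ V) :
    ∃ c : (⊤ : SimpleGraph V).Walk (f 0) (f 0), c.IsCycle ∧ c.length = 4 := by
  have hne : ∀ i j : Fin 4, i ≠ j → f i ≠ f j := fun i j h => f.injective.ne h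
  refine ⟨.cons (hne 0 1 (by decide)) <| .cons (hne 1 2 (by decide)) <|
    .cons (hne 2 3 (by decide)) <| .cons (hne 3 0 (by decide)) .nil, ?_, rfl⟩
  simp [Walk.isCycle_def, Walk.isTrail_def, Sym2.eq, Sym2.rel_iff', f.injective.eq_iff]

lemma card_le_three_of_isTriangleForest_top [Fintype V]
    (h : (⊤ : SimpleGraph V).IsTriangleForest) : Fintype.card V ≤ 3 := by
  by_contra! hcard
  obtain ⟨f⟩ : Nonempty (Fin 4 ↪ V) := Function.Embedding.nonempty_of_card_le (by simpa)
  obtain ⟨c, hc, hlen⟩ := exists_isCycle_length_four_top f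
  have := h _ c hc
  omega

end SimpleGraph

open SimpleGraph

/-- The complete graph `K₇` cannot be vertex-partitioned into two triangle-forests:
for no subset `S` of the vertices are both the subgraph induced on `S` and the subgraph
induced on its complement triangle-forests. -/
theorem K7_no_bipartition_into_triangleForests (S : Set (Fin 7)) :
    ¬ (((SimpleGraph.completeGraph (Fin 7)).induce S).IsTriangleForest ∧
       ((SimpleGraph.completeGraph (Fin 7)).induce Sᶜ).IsTriangleForest) := by
  classical
  rintro ⟨hS, hSc⟩
  rw [induce_top] at hS hSc
  have hS_card := card_le_three_of_isTriangleForest_top hS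
  have hSc_card := card_le_three_of_isTriangleForest_top hSc
  have hcompl := Fintype.card_compl_set S
  rw [Fintype.card_fin] at hcompl
  omega
end

section
/- Let G be the octahedron graph K_{2,2,2} on six vertices. If S is a subset of the vertex set of G such that the subgraph induced on S is a triangle-forest and S contains three pairwise adjacent vertices (a triangle of G), then the complement of S also contains three pairwise adjacent vertices. (Consequently, a vertex-partition of the octahedron into a forest and a triangle-forest in which the triangle-forest part contains a full triangle is impossible, since the opposite triangle would have to lie entirely in the forest part.) -/
/-- partner vertex -/
def opp (v : Fin 6) : Fin 6 := ⟨v.val ^^^ 1, by fin_cases v <;> decide⟩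

lemma octa_adj (a b : Fin 6) : octahedron.Adj a b ↔ a ≠ b ∧ a.val / 2 ≠ b.val / 2 := by
  simp [octahedron, SimpleGraph.fromRel_adj]
  tauto

lemma four_cycle_not_TF {V : Type*} {G : SimpleGraph V} {u v w x : V}
    (huv : G.Adj u v) (hvw : G.Adj v w) (hwx : G.Adj w x) (hxu : G.Adj x u)
    (huw : u ≠ w) (hvx : v ≠ x) : ¬ G.IsTriangleForest := by
  intro h
  have hc : (SimpleGraph.Walk.cons huv (SimpleGraph.Walk.cons hvw
      (SimpleGraph.Walk.cons hwx (SimpleGraph.Walk.cons hxu SimpleGraph.Walk.nil)))).IsCycle := by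
    simp [SimpleGraph.Walk.isCycle_def, SimpleGraph.Walk.isTrail_def, List.Nodup,
      SimpleGraph.Walk.edges, huv.ne, hvw.ne, hwx.ne, hxu.ne, huv.ne', hvw.ne', hwx.ne', hxu.ne',
      huw, hvx, huw.symm, hvx.symm, Sym2.eq, Sym2.rel_iff']
  have := h u _ hc
  simp at this

lemma opp_adj : ∀ a b : Fin 6, octahedron.Adj a b →
    octahedron.Adj (opp a) b ∧ octahedron.Adj (opp a) (opp b) := by
  simp only [octa_adj]; decide

lemma opp_ne : ∀ a : Fin 6, opp a ≠ a := by decide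

lemma ind_adj {S : Set (Fin 6)} {u v : Fin 6} (hu : u ∈ S) (hv : v ∈ S)
    (h : octahedron.Adj u v) : (octahedron.induce S).Adj ⟨u, hu⟩ ⟨v, hv⟩ := by
  simpa using h

/-- If `S` induces a triangle-forest in the octahedron and `S` contains a triangle
(three pairwise adjacent vertices), then the complement of `S` also contains a triangle. -/
theorem octahedron_triangleForest_triangle_in_compl (S : Set (Fin 6))
    (hS : (octahedron.induce S).IsTriangleForest)
    (htri : ∃ a b c : Fin 6, a ∈ S ∧ b ∈ S ∧ c ∈ S ∧
      octahedron.Adj a b ∧ octahedron.Adj a c ∧ octahedron.Adj b c) :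
    ∃ a b c : Fin 6, a ∈ Sᶜ ∧ b ∈ Sᶜ ∧ c ∈ Sᶜ ∧
      octahedron.Adj a b ∧ octahedron.Adj a c ∧ octahedron.Adj b c := by
  obtain ⟨a, b, c, ha, hb, hc, hab, hac, hbc⟩ := htri
  have hoa : opp a ∉ S := by
    intro hm
    exact four_cycle_not_TF (G := octahedron.induce S)
      (u := ⟨opp a, hm⟩) (v := ⟨b, hb⟩) (w := ⟨a, ha⟩) (x := ⟨c, hc⟩)
      (ind_adj hm hb (opp_adj a b hab).1) (ind_adj hb ha hab.symm) (ind_adj ha hc hac) (ind_adj hc hm (opp_adj a c hac).1.symm)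
      (fun h => opp_ne a (congrArg Subtype.val h))
      (fun h => hbc.ne (congrArg Subtype.val h)) hS
  have hob : opp b ∉ S := by
    intro hm
    exact four_cycle_not_TF (G := octahedron.induce S)
      (u := ⟨opp b, hm⟩) (v := ⟨a, ha⟩) (w := ⟨b, hb⟩) (x := ⟨c, hc⟩)
      (ind_adj hm ha (opp_adj b a hab.symm).1) (ind_adj ha hb hab) (ind_adj hb hc hbc) (ind_adj hc hm (opp_adj b c hbc).1.symm)
      (fun h => opp_ne b (congrArg Subtype.val h))
      (fun h => hac.ne (congrArg Subtype.val h)) hS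
  have hoc : opp c ∉ S := by
    intro hm
    exact four_cycle_not_TF (G := octahedron.induce S)
      (u := ⟨opp c, hm⟩) (v := ⟨a, ha⟩) (w := ⟨c, hc⟩) (x := ⟨b, hb⟩)
      (ind_adj hm ha (opp_adj c a hac.symm).1) (ind_adj ha hc hac) (ind_adj hc hb hbc.symm) (ind_adj hb hm (opp_adj c b hbc.symm).1.symm)
      (fun h => opp_ne c (congrArg Subtype.val h))
      (fun h => hab.ne (congrArg Subtype.val h)) hS
  exact ⟨opp a, opp b, opp c, hoa, hob, hoc, (opp_adj a b hab).2,
    (opp_adj a c hac).2, (opp_adj b c hbc).2⟩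
end
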